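/- arXiv:2502.17830 — 9 statements merged into one kernel-verified Lean document; each statement's English description precedes it below -/
import Mathlib

section
/- Let (δ, R) be a (1−α) P-certified decision with respect to the decision-maker's model 𝓜_DM (i.e., P{L(δ(Y), θ) ≤ R(Y)} ≥ 1 − α for every (θ, P) ∈ 𝓜_DM). Fix u ∈ [0,1] and a default cost C ∈ [0,1). If Q is an adoption rule whose conditional adoption probability satisfies q(a, r) ≤ u·1(r ≤ C) for all (a, r), then for every (θ, P) ∈ 𝓜_DM the risk of the implemented action satisfies E_P[L(δ_Q(Y), θ)] ≤ C + u·α·(1 − C). -/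
open MeasureTheory Set

/-!
Write the implemented loss as `C + q (L - C)`. The excess `q (L - C)` never exceeds
`u (1 - C)`, and it is nonpositive whenever the certificate holds (`L ≤ R`): either `R ≤ C`,
so `L ≤ C`, or `R > C`, so `q = 0`. Hence the excess is positive only on an event disjoint
from the certified event, which has probability at most `α`.
-/

theorem measureReal_le_of_disjoint_of_le_measure {Ω : Type*} [MeasurableSpace Ω]
    {μ : Measure Ω} [IsProbabilityMeasure μ] {E G : Set Ω} {α : ℝ}
    (hE : MeasurableSet E) (hEG : Disjoint E G) (hG : ENNReal.ofReal (1 - α) ≤ μ G) :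
    μ.real E ≤ α := by
  have hG' : 1 - α ≤ μ.real G := (ENNReal.ofReal_le_iff_le_toReal (measure_ne_top μ G)).1 hG
  have hunion : μ.real (G ∪ E) = μ.real G + μ.real E := measureReal_union hEG.symm hE
  linarith [measureReal_le_one (μ := μ) (s := G ∪ E)]

theorem integral_le_measureReal_mul_of_le_indicator {Ω : Type*} [MeasurableSpace Ω]
    {μ : Measure Ω} [IsFiniteMeasure μ] {f : Ω → ℝ} {E : Set Ω} {c : ℝ}
    (hf : Integrable f μ) (hE : MeasurableSet E) (hfE : ∀ x, f x ≤ E.indicator (fun _ => c) x) :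
    ∫ x, f x ∂μ ≤ μ.real E * c := by
  calc ∫ x, f x ∂μ ≤ ∫ x, E.indicator (fun _ => c) x ∂μ :=
        integral_mono hf ((integrable_const c).indicator hE) hfE
    _ = μ.real E * c := integral_indicator_const c hE

section Adoption

variable {q l r c u : ℝ}

theorem adoption_excess_le (hq0 : 0 ≤ q) (hq : q ≤ u * if r ≤ c then 1 else 0) (hu : 0 ≤ u)
    (hl : l ≤ 1) (hc : c ≤ 1) : q * (l - c) ≤ u * (1 - c) := by
  have hqu : q ≤ u := hq.trans (by split_ifs <;> simp [hu])
  calc q * (l - c) ≤ q * (1 - c) := by gcongr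
    _ ≤ u * (1 - c) := by gcongr

theorem adoption_excess_nonpos_of_le (hq0 : 0 ≤ q) (hq : q ≤ u * if r ≤ c then 1 else 0)
    (hlr : l ≤ r) : q * (l - c) ≤ 0 := by
  by_cases hrc : r ≤ c
  · exact mul_nonpos_of_nonneg_of_nonpos hq0 (by linarith)
  · rw [if_neg hrc, mul_zero] at hq
    simp [le_antisymm hq hq0]

theorem abs_adoption_excess_le_one (hq0 : 0 ≤ q) (hq : q ≤ u * if r ≤ c then 1 else 0)
    (hu : u ∈ Icc (0 : ℝ) 1) (hl : l ∈ Icc (0 : ℝ) 1) (hc : c ∈ Ico (0 : ℝ) 1) :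
    |q * (l - c)| ≤ 1 := by
  have hqu : q ≤ u := hq.trans (by split_ifs <;> simp [hu.1])
  rw [abs_mul, abs_of_nonneg hq0]
  have hlc : |l - c| ≤ 1 := abs_le.2 ⟨by linarith [hl.1, hc.2], by linarith [hl.2, hc.1]⟩
  nlinarith [abs_nonneg (l - c), hu.2]

end Adoption

theorem statement0_general
    {Y : Type*} [MeasurableSpace Y] {A : Type*} {Θ : Type*}
    (L : A → Θ → ℝ) (hL : ∀ a θ, L a θ ∈ Icc (0 : ℝ) 1)
    (α : ℝ)
    (M : Set (Θ × Measure Y))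
    (hMprob : ∀ p ∈ M, IsProbabilityMeasure p.2)
    (δ : Y → A) (R : Y → ℝ)
    (hcert : ∀ p ∈ M, ENNReal.ofReal (1 - α) ≤ p.2 {y | L (δ y) p.1 ≤ R y})
    (u C : ℝ) (hu : u ∈ Icc (0 : ℝ) 1) (hC : C ∈ Ico (0 : ℝ) 1)
    (q : A → ℝ → ℝ) (hq0 : ∀ a r, 0 ≤ q a r)
    (hq : ∀ a r, q a r ≤ u * (if r ≤ C then 1 else 0))
    (hmeasL : ∀ θ : Θ, Measurable fun y => L (δ y) θ)
    (hmeasq : Measurable fun y => q (δ y) (R y)) :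
    ∀ p ∈ M,
      ∫ y, (q (δ y) (R y) * L (δ y) p.1 + (1 - q (δ y) (R y)) * C) ∂p.2
        ≤ C + u * α * (1 - C) := by
  rintro ⟨θ, μ⟩ hp
  have : IsProbabilityMeasure μ := hMprob _ hp
  set f : Y → ℝ := fun y => q (δ y) (R y) * (L (δ y) θ - C) with hf
  have hf_meas : Measurable f := hmeasq.mul ((hmeasL θ).sub measurable_const)
  have hf_int : Integrable f μ := Integrable.of_bound hf_meas.aestronglyMeasurable 1 <|
    .of_forall fun y => abs_adoption_excess_le_one (hq0 _ _) (hq _ _) hu (hL _ _) hC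
  set E : Set Y := {y | 0 < f y}
  have hE : MeasurableSet E := measurableSet_lt measurable_const hf_meas
  have hEα : μ.real E ≤ α :=
    measureReal_le_of_disjoint_of_le_measure hE
      (disjoint_left.2 fun y hpos hLR => (adoption_excess_nonpos_of_le (hq0 _ _) (hq _ _)
        hLR).not_gt hpos) (hcert _ hp)
  have hfE (y : Y) : f y ≤ E.indicator (fun _ => u * (1 - C)) y :=
    le_indicator_apply (fun _ => adoption_excess_le (hq0 _ _) (hq _ _) hu.1 (hL _ _).2 hC.2.le)
      fun hy => not_lt.1 hy
  calc ∫ y, (q (δ y) (R y) * L (δ y) θ + (1 - q (δ y) (R y)) * C) ∂μ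
      = ∫ y, (C + f y) ∂μ := integral_congr_ae (.of_forall fun y => by simp only [hf]; ring)
    _ = C + ∫ y, f y ∂μ := by simp [integral_add (integrable_const C) hf_int]
    _ ≤ C + μ.real E * (u * (1 - C)) := by
        gcongr; exact integral_le_measureReal_mul_of_le_indicator hf_int hE hfE
    _ ≤ C + α * (u * (1 - C)) := by
        gcongr; exact mul_nonneg hu.1 (by linarith [hC.2])
    _ = C + u * α * (1 - C) := by ring

/-- Proposition 1 (`p_upper_bound`): if `(δ, R)` is a `(1-α)` P-certified decision with
respect to the decision-maker's model `M`, `u ∈ [0,1]`, `C ∈ [0,1)`, and the conditional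
adoption probability satisfies `q(a, r) ≤ u·1(r ≤ C)`, then for every `(θ, P) ∈ M` the
risk of the implemented action is at most `C + u·α·(1 - C)`. -/
theorem statement0
    {Y : Type*} [MeasurableSpace Y] {A : Type*} {Θ : Type*}
    (L : A → Θ → ℝ) (hL : ∀ a θ, L a θ ∈ Icc (0 : ℝ) 1)
    (α : ℝ) (hα : α ∈ Ioo (0 : ℝ) 1)
    (M : Set (Θ × Measure Y))
    (hMprob : ∀ p ∈ M, IsProbabilityMeasure p.2)
    (δ : Y → A) (R : Y → ℝ) (hR01 : ∀ y, R y ∈ Icc (0 : ℝ) 1)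
    (hcert : ∀ p ∈ M, ENNReal.ofReal (1 - α) ≤ p.2 {y | L (δ y) p.1 ≤ R y})
    (u C : ℝ) (hu : u ∈ Icc (0 : ℝ) 1) (hC : C ∈ Ico (0 : ℝ) 1)
    (q : A → ℝ → ℝ) (hq0 : ∀ a r, 0 ≤ q a r)
    (hq : ∀ a r, q a r ≤ u * (if r ≤ C then 1 else 0))
    (hmeasL : ∀ θ : Θ, Measurable fun y => L (δ y) θ)
    (hmeasq : Measurable fun y => q (δ y) (R y)) :
    ∀ p ∈ M,
      ∫ y, (q (δ y) (R y) * L (δ y) p.1 + (1 - q (δ y) (R y)) * C) ∂p.2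
        ≤ C + u * α * (1 - C) :=
  statement0_general L hL α M hMprob δ R hcert u C hu hC q hq0 hq hmeasL hmeasq
end

section
/- Let (δ, R) be a (1−α) P-certified decision and C ∈ [0,1) the cost of the default action. For any adoption rule Q that is a function of Y, the risk satisfies E_P[L(δ_Q(Y), θ)] ≤ α + E_P[Q·R(Y) + (1−Q)·C] for every (θ, P) in the model. In particular, if Q = 1(R(Y) ≤ C), then E_P[L(δ_Q(Y), θ)] ≤ α + E_P[min(R(Y), C)]. -/
/-!
Off the certification event `{L(δ(Y), θ) ≤ R(Y)}` the adopted loss exceeds the certified bound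
`Q·R + (1-Q)·C` by at most `1`, and under `P` that event fails with probability at most `α`.
Integrating the pointwise bound "excess ≤ indicator of failure" gives the risk bound; for
`Q = 1(R ≤ C)` the mixture `Q·R + (1-Q)·C` is exactly `min(R, C)`.
-/

open MeasureTheory Set

section

variable {Y : Type*} [MeasurableSpace Y] {μ : Measure Y}

lemma measureReal_compl_le_of_ofReal_one_sub_le [IsProbabilityMeasure μ] {S : Set Y} {α : ℝ}
    (hS : MeasurableSet S) (h : ENNReal.ofReal (1 - α) ≤ μ S) : μ.real Sᶜ ≤ α := by
  have h' : 1 - α ≤ μ.real S := (ENNReal.ofReal_le_iff_le_toReal (measure_ne_top μ S)).1 h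
  rw [probReal_compl_eq_one_sub hS]
  linarith

lemma integral_le_integral_add_measureReal_compl [IsFiniteMeasure μ] {f g : Y → ℝ} {S : Set Y}
    (hf : Integrable f μ) (hg : Integrable g μ) (hS : MeasurableSet S)
    (hle : ∀ y ∈ S, f y ≤ g y) (hle_add_one : ∀ y, f y ≤ g y + 1) :
    ∫ y, f y ∂μ ≤ ∫ y, g y ∂μ + μ.real Sᶜ := by
  have hind : Integrable (Sᶜ.indicator 1) μ := (integrable_const (1 : ℝ)).indicator hS.compl
  have hpt : ∀ y, f y ≤ g y + Sᶜ.indicator 1 y := by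
    intro y
    by_cases hy : y ∈ S
    · simpa [hy] using hle y hy
    · simpa [hy] using hle_add_one y
  calc ∫ y, f y ∂μ ≤ ∫ y, (g y + Sᶜ.indicator 1 y) ∂μ := integral_mono hf (hg.add hind) hpt
    _ = ∫ y, g y ∂μ + μ.real Sᶜ := by
      rw [integral_add hg hind, integral_indicator_one hS.compl]

lemma integrable_mul_add_one_sub_mul [IsFiniteMeasure μ] {Q f : Y → ℝ} (c K : ℝ)
    (hQ : Measurable Q) (hf : Measurable f) (hQ01 : ∀ y, Q y = 0 ∨ Q y = 1)
    (hfK : ∀ y, |f y| ≤ K) : Integrable (fun y => Q y * f y + (1 - Q y) * c) μ := by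
  refine Integrable.of_bound (by fun_prop) (K + |c|) (ae_of_all _ fun y => ?_)
  have := abs_nonneg c
  have := (abs_nonneg (f y)).trans (hfK y)
  rcases hQ01 y with h | h <;> simp [h] <;> linarith [hfK y]

end

theorem statement1_general
    {Y : Type*} [MeasurableSpace Y] {A : Type*} {Θ : Type*}
    (L : A → Θ → ℝ) (hL : ∀ a θ, L a θ ∈ Icc (0 : ℝ) 1)
    (α : ℝ)
    (M : Set (Θ × Measure Y))
    (hMprob : ∀ p ∈ M, IsProbabilityMeasure p.2)
    (δ : Y → A) (R : Y → ℝ) (hR01 : ∀ y, R y ∈ Icc (0 : ℝ) 1)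
    (hcert : ∀ p ∈ M, ENNReal.ofReal (1 - α) ≤ p.2 {y | L (δ y) p.1 ≤ R y})
    (C : ℝ)
    (Q : Y → ℝ) (hQ01 : ∀ y, Q y = 0 ∨ Q y = 1)
    (hmeasL : ∀ θ : Θ, Measurable fun y => L (δ y) θ)
    (hmeasR : Measurable R) (hmeasQ : Measurable Q) :
    (∀ p ∈ M,
      ∫ y, (Q y * L (δ y) p.1 + (1 - Q y) * C) ∂p.2
        ≤ α + ∫ y, (Q y * R y + (1 - Q y) * C) ∂p.2) ∧
    ((∀ y, Q y = if R y ≤ C then 1 else 0) →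
      ∀ p ∈ M,
        ∫ y, (Q y * L (δ y) p.1 + (1 - Q y) * C) ∂p.2
          ≤ α + ∫ y, min (R y) C ∂p.2) := by
  have risk_le : ∀ p ∈ M, ∫ y, (Q y * L (δ y) p.1 + (1 - Q y) * C) ∂p.2
      ≤ α + ∫ y, (Q y * R y + (1 - Q y) * C) ∂p.2 := by
    intro p hp
    have := hMprob p hp
    have hS : MeasurableSet {y | L (δ y) p.1 ≤ R y} := measurableSet_le (hmeasL p.1) hmeasR
    have hbound {b : ℝ} (hb : b ∈ Icc (0 : ℝ) 1) : |b| ≤ 1 := abs_le.2 ⟨by linarith [hb.1], hb.2⟩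
    have hle (y : Y) (hy : L (δ y) p.1 ≤ R y) :
        Q y * L (δ y) p.1 + (1 - Q y) * C ≤ Q y * R y + (1 - Q y) * C := by
      rcases hQ01 y with h | h <;> simp [h, hy]
    have hle_add_one (y : Y) :
        Q y * L (δ y) p.1 + (1 - Q y) * C ≤ Q y * R y + (1 - Q y) * C + 1 := by
      rcases hQ01 y with h | h
      · simp [h]
      · simp only [h]; linarith [(hL (δ y) p.1).2, (hR01 y).1]
    have hexcess := integral_le_integral_add_measureReal_compl (μ := p.2)
      (integrable_mul_add_one_sub_mul C 1 hmeasQ (hmeasL p.1) hQ01 fun _ => hbound (hL _ _))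
      (integrable_mul_add_one_sub_mul C 1 hmeasQ hmeasR hQ01 fun y => hbound (hR01 y))
      hS hle hle_add_one
    linarith [measureReal_compl_le_of_ofReal_one_sub_le hS (hcert p hp)]
  refine ⟨risk_le, fun hQdef p hp => ?_⟩
  have hmin (y : Y) : Q y * R y + (1 - Q y) * C = min (R y) C := by
    by_cases hy : R y ≤ C
    · simp [hQdef y, hy]
    · simp [hQdef y, hy, (not_le.1 hy).le]
  simpa only [hmin] using risk_le p hp

/-- For a `(1-α)` P-certified decision `(δ, R)` and any `{0,1}`-valued adoption rule `Q`
that is a function of `Y`, the risk satisfies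
`E_P[L(δ_Q(Y), θ)] ≤ α + E_P[Q·R(Y) + (1-Q)·C]`; in particular, if `Q = 1(R(Y) ≤ C)` then
`E_P[L(δ_Q(Y), θ)] ≤ α + E_P[min(R(Y), C)]`. -/
theorem statement1
    {Y : Type*} [MeasurableSpace Y] {A : Type*} {Θ : Type*}
    (L : A → Θ → ℝ) (hL : ∀ a θ, L a θ ∈ Icc (0 : ℝ) 1)
    (α : ℝ) (hα : α ∈ Ioo (0 : ℝ) 1)
    (M : Set (Θ × Measure Y))
    (hMprob : ∀ p ∈ M, IsProbabilityMeasure p.2)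
    (δ : Y → A) (R : Y → ℝ) (hR01 : ∀ y, R y ∈ Icc (0 : ℝ) 1)
    (hcert : ∀ p ∈ M, ENNReal.ofReal (1 - α) ≤ p.2 {y | L (δ y) p.1 ≤ R y})
    (C : ℝ) (hC : C ∈ Ico (0 : ℝ) 1)
    (Q : Y → ℝ) (hQ01 : ∀ y, Q y = 0 ∨ Q y = 1)
    (hmeasL : ∀ θ : Θ, Measurable fun y => L (δ y) θ)
    (hmeasR : Measurable R) (hmeasQ : Measurable Q) :
    (∀ p ∈ M,
      ∫ y, (Q y * L (δ y) p.1 + (1 - Q y) * C) ∂p.2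
        ≤ α + ∫ y, (Q y * R y + (1 - Q y) * C) ∂p.2) ∧
    ((∀ y, Q y = if R y ≤ C then 1 else 0) →
      ∀ p ∈ M,
        ∫ y, (Q y * L (δ y) p.1 + (1 - Q y) * C) ∂p.2
          ≤ α + ∫ y, min (R y) C ∂p.2) :=
  statement1_general L hL α M hMprob δ R hR01 hcert C Q hQ01 hmeasL hmeasR hmeasQ
end

section
/- Suppose the adoption probability depends only on the certificate, q(a, r) = q(r), and the model 𝓜_DM is sufficiently rich: for every probability distribution G on [0,1]² satisfying G({(l, r) : l ≤ r}) ≥ 1 − α, there exists (θ, P) ∈ 𝓜_DM under which the pair (L(δ(Y), θ), R(Y)) has distribution G. Then for any u ∈ [0,1], the worst-case risk bound sup over (θ, P) ∈ 𝓜_DM of E_P[L(δ_Q(Y), θ)] ≤ C + u·α·(1 − C) holds if and only if sup_{a ≤ α} { a · sup_{r ∈ [0,1]} q(r)·(1 − C) + (1 − a) · sup_{r ≥ C} q(r)·(r − C) } ≤ u·α·(1 − C). -/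
/-! The expected loss is `C + E[q(R)(ℓ - C)]` with `ℓ = L(δ(Y), θ)`. Where the certificate holds
(`ℓ ≤ R`) the integrand is at most `sup_{r ≥ C} q(r)(r - C)`, and where it fails at most
`sup_r q(r)(1 - C)`; so a model violating the certificate with probability `a ≤ α` has excess
risk at most `excessRiskBound q C a`. Conversely, richness supplies a model under which
`(ℓ, R)` has the two-point law `a·δ(1, r₁) + (1 - a)·δ(r₂, r₂)`, whose excess risk
`a(1 - C)q(r₁) + (1 - a)q(r₂)(r₂ - C)` approaches the bound as `r₁`, `r₂` range over `[0, 1]`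
and `[C, 1]`. -/

open MeasureTheory Set

lemma mul_csSup_add_mul_csSup_le {s t : Set ℝ} (hs : s.Nonempty) (hs' : BddAbove s)
    (ht : t.Nonempty) (ht' : BddAbove t) {a b c : ℝ} (ha : 0 ≤ a) (hb : 0 ≤ b)
    (h : ∀ x ∈ s, ∀ y ∈ t, a * x + b * y ≤ c) : a * sSup s + b * sSup t ≤ c := by
  rw [← smul_eq_mul, ← smul_eq_mul, ← Real.sSup_smul_of_nonneg ha,
    ← Real.sSup_smul_of_nonneg hb,
    ← csSup_add hs.smul_set (hs'.smul_of_nonneg ha) ht.smul_set (ht'.smul_of_nonneg hb)]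
  refine csSup_le (hs.smul_set.add ht.smul_set) ?_
  rintro _ ⟨_, ⟨x, hx, rfl⟩, _, ⟨y, hy, rfl⟩, rfl⟩
  exact h x hx y hy

section TwoPoint

variable {E : Type*} [MeasurableSpace E] [MeasurableSingletonClass E]

noncomputable def twoPoint (a : ℝ) (x y : E) : Measure E :=
  ENNReal.ofReal a • Measure.dirac x + ENNReal.ofReal (1 - a) • Measure.dirac y

variable {a : ℝ} {x y : E}

lemma twoPoint_apply (s : Set E) :
    twoPoint a x y s = ENNReal.ofReal a * s.indicator 1 x
      + ENNReal.ofReal (1 - a) * s.indicator 1 y := by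
  simp [twoPoint, Measure.dirac_apply]

lemma twoPoint_apply_of_mem (ha₀ : 0 ≤ a) (ha₁ : a ≤ 1) {s : Set E} (hx : x ∈ s) (hy : y ∈ s) :
    twoPoint a x y s = 1 := by
  simp only [twoPoint_apply, indicator_of_mem hx, indicator_of_mem hy, Pi.one_apply, mul_one]
  rw [← ENNReal.ofReal_add ha₀ (by linarith)]
  norm_num

lemma isProbabilityMeasure_twoPoint (ha₀ : 0 ≤ a) (ha₁ : a ≤ 1) :
    IsProbabilityMeasure (twoPoint a x y) :=
  ⟨twoPoint_apply_of_mem ha₀ ha₁ (mem_univ x) (mem_univ y)⟩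

lemma ofReal_one_sub_le_twoPoint {s : Set E} (hy : y ∈ s) :
    ENNReal.ofReal (1 - a) ≤ twoPoint a x y s := by
  rw [twoPoint_apply, indicator_of_mem hy, Pi.one_apply, mul_one]
  exact le_add_self

lemma integral_twoPoint (ha₀ : 0 ≤ a) (ha₁ : a ≤ 1) (f : E → ℝ) :
    ∫ z, f z ∂twoPoint a x y = a * f x + (1 - a) * f y := by
  rw [twoPoint, integral_add_measure
      ((integrable_dirac enorm_lt_top).smul_measure ENNReal.ofReal_ne_top)
      ((integrable_dirac enorm_lt_top).smul_measure ENNReal.ofReal_ne_top),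
    integral_smul_measure, integral_smul_measure, integral_dirac, integral_dirac,
    ENNReal.toReal_ofReal ha₀, ENNReal.toReal_ofReal (by linarith), smul_eq_mul, smul_eq_mul]

end TwoPoint

lemma integral_le_measureReal_mul_add_measureReal_compl_mul {Y : Type*} [MeasurableSpace Y]
    {P : Measure Y} [IsFiniteMeasure P] {f : Y → ℝ} (hf : Integrable f P) {s : Set Y}
    (hs : MeasurableSet s) {c₁ c₂ : ℝ} (h₁ : ∀ y ∈ s, f y ≤ c₁) (h₂ : ∀ y ∈ sᶜ, f y ≤ c₂) :
    ∫ y, f y ∂P ≤ P.real s * c₁ + P.real sᶜ * c₂ := by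
  rw [← integral_add_compl hs hf]
  have hs₁ := setIntegral_mono_on hf.integrableOn (integrableOn_const (C := c₁)) hs h₁
  have hs₂ := setIntegral_mono_on hf.integrableOn (integrableOn_const (C := c₂)) hs.compl h₂
  rw [setIntegral_const, smul_eq_mul] at hs₁ hs₂
  linarith

lemma measureReal_compl_le_of_ofReal_one_sub_le_s3 {Y : Type*} [MeasurableSpace Y]
    {P : Measure Y} [IsProbabilityMeasure P] {s : Set Y} (hs : MeasurableSet s) {α : ℝ}
    (h : ENNReal.ofReal (1 - α) ≤ P s) : P.real sᶜ ≤ α := by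
  rw [probReal_compl_eq_one_sub hs, measureReal_def]
  linarith [(ENNReal.ofReal_le_iff_le_toReal (measure_ne_top P s)).1 h]

/-- Conditional expected loss of `δ_Q` given `(L(δ(Y), θ), R(Y)) = x`. -/
def adoptionLoss (q : ℝ → ℝ) (C : ℝ) (x : ℝ × ℝ) : ℝ := q x.2 * x.1 + (1 - q x.2) * C

noncomputable def supAdoption (q : ℝ → ℝ) : ℝ := sSup (q '' Icc 0 1)

noncomputable def supAdoptionGain (q : ℝ → ℝ) (C : ℝ) : ℝ :=
  sSup ((fun r => q r * (r - C)) '' Icc C 1)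

noncomputable def excessRiskBound (q : ℝ → ℝ) (C a : ℝ) : ℝ :=
  a * supAdoption q * (1 - C) + (1 - a) * supAdoptionGain q C

section Adoption

variable {q : ℝ → ℝ} {C : ℝ}

lemma adoptionLoss_eq (q : ℝ → ℝ) (C l r : ℝ) : adoptionLoss q C (l, r) = C + q r * (l - C) := by
  simp only [adoptionLoss]; ring

lemma measurable_adoptionLoss (hq : Measurable q) : Measurable (adoptionLoss q C) :=
  ((hq.comp measurable_snd).mul measurable_fst).add
    ((measurable_const.sub (hq.comp measurable_snd)).mul measurable_const)

lemma adoptionLoss_mem_Icc (hq : ∀ r, q r ∈ Icc (0 : ℝ) 1) (hC : C ∈ Icc (0 : ℝ) 1) {l : ℝ}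
    (hl : l ∈ Icc (0 : ℝ) 1) (r : ℝ) : adoptionLoss q C (l, r) ∈ Icc (0 : ℝ) 1 := by
  obtain ⟨hq₀, hq₁⟩ := hq r
  simp only [adoptionLoss, mem_Icc] at hC hl ⊢
  constructor <;> nlinarith

lemma bddAbove_image_adoption (hq : ∀ r, q r ≤ 1) : BddAbove (q '' Icc 0 1) :=
  ⟨1, by rintro _ ⟨r, -, rfl⟩; exact hq r⟩

lemma bddAbove_image_adoptionGain (hq : ∀ r, q r ≤ 1) :
    BddAbove ((fun r => q r * (r - C)) '' Icc C 1) :=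
  ⟨1 - C, by
    rintro _ ⟨r, hr, rfl⟩
    nlinarith [hq r, hr.1, hr.2]⟩

lemma le_supAdoption (hq : ∀ r, q r ≤ 1) {r : ℝ} (hr : r ∈ Icc (0 : ℝ) 1) :
    q r ≤ supAdoption q :=
  le_csSup (bddAbove_image_adoption hq) (mem_image_of_mem q hr)

lemma le_supAdoptionGain (hq : ∀ r, q r ≤ 1) {r : ℝ} (hr : r ∈ Icc C 1) :
    q r * (r - C) ≤ supAdoptionGain q C :=
  le_csSup (bddAbove_image_adoptionGain hq) (mem_image_of_mem (fun r => q r * (r - C)) hr)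

lemma supAdoptionGain_nonneg (hq : ∀ r, q r ≤ 1) (hC : C ≤ 1) : 0 ≤ supAdoptionGain q C := by
  simpa using le_supAdoptionGain hq ⟨le_rfl, hC⟩

lemma adoptionLoss_le_of_le (hq : ∀ r, q r ∈ Icc (0 : ℝ) 1) (hC : C ≤ 1) {l r : ℝ}
    (hlr : l ≤ r) (hr : r ≤ 1) : adoptionLoss q C (l, r) ≤ C + supAdoptionGain q C := by
  rw [adoptionLoss_eq]
  gcongr C + ?_
  rcases le_or_gt C r with hCr | hrC
  · calc q r * (l - C) ≤ q r * (r - C) := by gcongr; exact (hq r).1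
      _ ≤ supAdoptionGain q C := le_supAdoptionGain (fun r => (hq r).2) ⟨hCr, hr⟩
  · calc q r * (l - C) ≤ 0 := mul_nonpos_of_nonneg_of_nonpos (hq r).1 (by linarith)
      _ ≤ supAdoptionGain q C := supAdoptionGain_nonneg (fun r => (hq r).2) hC

lemma adoptionLoss_le (hq : ∀ r, q r ∈ Icc (0 : ℝ) 1) (hC : C ≤ 1) {l r : ℝ} (hl : l ≤ 1)
    (hr : r ∈ Icc (0 : ℝ) 1) : adoptionLoss q C (l, r) ≤ C + supAdoption q * (1 - C) := by
  rw [adoptionLoss_eq]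
  gcongr C + ?_
  calc q r * (l - C) ≤ q r * (1 - C) := by gcongr; exact (hq r).1
    _ ≤ supAdoption q * (1 - C) :=
      mul_le_mul_of_nonneg_right (le_supAdoption (fun r => (hq r).2) hr) (by linarith)

theorem integral_adoptionLoss_le_excessRiskBound {Y : Type*} [MeasurableSpace Y]
    {P : Measure Y} [IsProbabilityMeasure P] (hq : ∀ r, q r ∈ Icc (0 : ℝ) 1)
    (hqm : Measurable q) (hC : C ∈ Icc (0 : ℝ) 1) {ℓ R : Y → ℝ} (hℓ : Measurable ℓ)
    (hR : Measurable R) (hℓ01 : ∀ y, ℓ y ∈ Icc (0 : ℝ) 1) (hR01 : ∀ y, R y ∈ Icc (0 : ℝ) 1) :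
    ∫ y, adoptionLoss q C (ℓ y, R y) ∂P
      ≤ C + excessRiskBound q C (P.real {y | ℓ y ≤ R y}ᶜ) := by
  have hB : MeasurableSet {y | ℓ y ≤ R y} := measurableSet_le hℓ hR
  have hint : Integrable (fun y => adoptionLoss q C (ℓ y, R y)) P := by
    refine .of_bound ((measurable_adoptionLoss hqm).comp (hℓ.prodMk hR)).aestronglyMeasurable 1
      (.of_forall fun y => ?_)
    obtain ⟨h₀, h₁⟩ := adoptionLoss_mem_Icc hq hC (hℓ01 y) (R y)
    rwa [Real.norm_of_nonneg h₀]
  refine (integral_le_measureReal_mul_add_measureReal_compl_mul hint hB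
    (fun y hy => adoptionLoss_le_of_le hq hC.2 hy (hR01 y).2)
    (fun y _ => adoptionLoss_le hq hC.2 (hℓ01 y).2 (hR01 y))).trans_eq ?_
  rw [probReal_compl_eq_one_sub hB, excessRiskBound]
  ring

theorem excessRiskBound_le_of_forall (hq : ∀ r, q r ∈ Icc (0 : ℝ) 1) (hC : C ≤ 1) {a c : ℝ}
    (ha₀ : 0 ≤ a) (ha₁ : a ≤ 1)
    (h : ∀ r₁ ∈ Icc (0 : ℝ) 1, ∀ r₂ ∈ Icc C 1,
      a * (1 - C) * q r₁ + (1 - a) * (q r₂ * (r₂ - C)) ≤ c) :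
    excessRiskBound q C a ≤ c := by
  have hq₁ : ∀ r, q r ≤ 1 := fun r => (hq r).2
  calc excessRiskBound q C a = a * (1 - C) * supAdoption q + (1 - a) * supAdoptionGain q C := by
        rw [excessRiskBound]; ring
    _ ≤ c := mul_csSup_add_mul_csSup_le (Set.image_nonempty.2 (nonempty_Icc.2 zero_le_one))
        (bddAbove_image_adoption hq₁) (Set.image_nonempty.2 (nonempty_Icc.2 hC))
        (bddAbove_image_adoptionGain hq₁) (by nlinarith) (by linarith)
        (by rintro _ ⟨r₁, hr₁, rfl⟩ _ ⟨r₂, hr₂, rfl⟩; exact h r₁ hr₁ r₂ hr₂)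

lemma integral_adoptionLoss_twoPoint {a : ℝ} (ha₀ : 0 ≤ a) (ha₁ : a ≤ 1) (r₁ r₂ : ℝ) :
    ∫ x, adoptionLoss q C x ∂twoPoint a (1, r₁) (r₂, r₂)
      = C + (a * (1 - C) * q r₁ + (1 - a) * (q r₂ * (r₂ - C))) := by
  rw [integral_twoPoint ha₀ ha₁, adoptionLoss_eq, adoptionLoss_eq]
  ring

end Adoption

theorem statement3_general
    {Y : Type*} [MeasurableSpace Y] {A : Type*} {Θ : Type*}
    (L : A → Θ → ℝ) (hL : ∀ a θ, L a θ ∈ Icc (0 : ℝ) 1)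
    (α : ℝ) (hα : α ∈ Ioo (0 : ℝ) 1)
    (δ : Y → A) (R : Y → ℝ) (hR01 : ∀ y, R y ∈ Icc (0 : ℝ) 1)
    (M : Set (Θ × Measure Y))
    (hMprob : ∀ p ∈ M, IsProbabilityMeasure p.2)
    (hMdef : ∀ p ∈ M, ENNReal.ofReal (1 - α) ≤ p.2 {y | L (δ y) p.1 ≤ R y})
    (C : ℝ) (hC : C ∈ Ico (0 : ℝ) 1)
    (q : ℝ → ℝ) (hq01 : ∀ r, q r ∈ Icc (0 : ℝ) 1) (hmeasq : Measurable q)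
    (hmeasL : ∀ θ : Θ, Measurable fun y => L (δ y) θ)
    (hmeasR : Measurable R)
    (hrich : ∀ G : Measure (ℝ × ℝ), IsProbabilityMeasure G →
      G (Icc (0 : ℝ) 1 ×ˢ Icc (0 : ℝ) 1) = 1 →
      ENNReal.ofReal (1 - α) ≤ G {x | x.1 ≤ x.2} →
      ∃ p ∈ M, Measure.map (fun y => (L (δ y) p.1, R y)) p.2 = G)
    (u : ℝ) :
    (∀ p ∈ M,
        ∫ y, (q (R y) * L (δ y) p.1 + (1 - q (R y)) * C) ∂p.2 ≤ C + u * α * (1 - C))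
      ↔ (∀ a : ℝ, 0 ≤ a → a ≤ α →
          a * sSup (q '' Icc (0 : ℝ) 1) * (1 - C)
            + (1 - a) * sSup ((fun r => q r * (r - C)) '' Icc C 1)
            ≤ u * α * (1 - C)) := by
  have hC' : C ∈ Icc (0 : ℝ) 1 := Ico_subset_Icc_self hC
  change (∀ p ∈ M, ∫ y, adoptionLoss q C (L (δ y) p.1, R y) ∂p.2 ≤ C + u * α * (1 - C))
    ↔ ∀ a, 0 ≤ a → a ≤ α → excessRiskBound q C a ≤ u * α * (1 - C)
  constructor
  · intro H a ha₀ haα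
    have ha₁ : a ≤ 1 := haα.trans hα.2.le
    refine excessRiskBound_le_of_forall hq01 hC'.2 ha₀ ha₁ fun r₁ hr₁ r₂ hr₂ => ?_
    have hr₂' : r₂ ∈ Icc (0 : ℝ) 1 := ⟨hC.1.trans hr₂.1, hr₂.2⟩
    obtain ⟨p, hpM, hmap⟩ := hrich (twoPoint a (1, r₁) (r₂, r₂))
      (isProbabilityMeasure_twoPoint ha₀ ha₁)
      (twoPoint_apply_of_mem ha₀ ha₁ ⟨right_mem_Icc.2 zero_le_one, hr₁⟩ ⟨hr₂', hr₂'⟩)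
      ((ENNReal.ofReal_le_ofReal (by linarith)).trans
        (ofReal_one_sub_le_twoPoint (s := {x : ℝ × ℝ | x.1 ≤ x.2}) (le_refl r₂)))
    have hrisk := integral_map (μ := p.2) ((hmeasL p.1).prodMk hmeasR).aemeasurable
      (measurable_adoptionLoss hmeasq).aestronglyMeasurable (f := adoptionLoss q C)
    rw [hmap, integral_adoptionLoss_twoPoint ha₀ ha₁] at hrisk
    linarith [H p hpM]
  · intro H p hpM
    have := hMprob p hpM
    have hviol : p.2.real {y | L (δ y) p.1 ≤ R y}ᶜ ≤ α :=
      measureReal_compl_le_of_ofReal_one_sub_le_s3 (measurableSet_le (hmeasL p.1) hmeasR)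
        (hMdef p hpM)
    calc ∫ y, adoptionLoss q C (L (δ y) p.1, R y) ∂p.2
        ≤ C + excessRiskBound q C (p.2.real {y | L (δ y) p.1 ≤ R y}ᶜ) :=
          integral_adoptionLoss_le_excessRiskBound hq01 hmeasq hC' (hmeasL p.1) hmeasR
            (fun y => hL _ _) hR01
      _ ≤ C + u * α * (1 - C) := by
          gcongr C + ?_
          exact H _ measureReal_nonneg hviol

/-- Lemma (q_condition): if the adoption probability depends only on the certificate and
the decision-maker's model `M` is sufficiently rich, then the worst-case risk bound
`sup_{(θ,P) ∈ M} E_P[L(δ_Q(Y), θ)] ≤ C + u·α·(1-C)` holds if and only if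
`sup_{a ≤ α} { a·sup_{r ∈ [0,1]} q(r)(1-C) + (1-a)·sup_{r ≥ C} q(r)(r-C) } ≤ u·α·(1-C)`. -/
theorem statement3
    {Y : Type*} [MeasurableSpace Y] {A : Type*} {Θ : Type*}
    (L : A → Θ → ℝ) (hL : ∀ a θ, L a θ ∈ Icc (0 : ℝ) 1)
    (α : ℝ) (hα : α ∈ Ioo (0 : ℝ) 1)
    (δ : Y → A) (R : Y → ℝ) (hR01 : ∀ y, R y ∈ Icc (0 : ℝ) 1)
    (M : Set (Θ × Measure Y))
    (hMprob : ∀ p ∈ M, IsProbabilityMeasure p.2)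
    (hMdef : ∀ p ∈ M, ENNReal.ofReal (1 - α) ≤ p.2 {y | L (δ y) p.1 ≤ R y})
    (C : ℝ) (hC : C ∈ Ico (0 : ℝ) 1)
    (q : ℝ → ℝ) (hq01 : ∀ r, q r ∈ Icc (0 : ℝ) 1) (hmeasq : Measurable q)
    (hmeasL : ∀ θ : Θ, Measurable fun y => L (δ y) θ)
    (hmeasR : Measurable R)
    (hrich : ∀ G : Measure (ℝ × ℝ), IsProbabilityMeasure G →
      G (Icc (0 : ℝ) 1 ×ˢ Icc (0 : ℝ) 1) = 1 →
      ENNReal.ofReal (1 - α) ≤ G {x | x.1 ≤ x.2} →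
      ∃ p ∈ M, Measure.map (fun y => (L (δ y) p.1, R y)) p.2 = G)
    (u : ℝ) (hu : u ∈ Icc (0 : ℝ) 1) :
    (∀ p ∈ M,
        ∫ y, (q (R y) * L (δ y) p.1 + (1 - q (R y)) * C) ∂p.2 ≤ C + u * α * (1 - C))
      ↔ (∀ a : ℝ, 0 ≤ a → a ≤ α →
          a * sSup (q '' Icc (0 : ℝ) 1) * (1 - C)
            + (1 - a) * sSup ((fun r => q r * (r - C)) '' Icc C 1)
            ≤ u * α * (1 - C)) :=
  statement3_general L hL α hα δ R hR01 M hMprob hMdef C hC q hq01 hmeasq hmeasL hmeasR hrich u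
end

section
/- Suppose the adoption probability depends only on the certificate, q(a, r) = q(r), the model 𝓜_DM is sufficiently rich (for every probability distribution G on [0,1]² with G({(l, r) : l ≤ r}) ≥ 1 − α, there exists (θ, P) ∈ 𝓜_DM under which (L(δ(Y), θ), R(Y)) ∼ G), and additionally sup_{r ∈ [0,1]} q(r) = 1. Then sup over (θ, P) ∈ 𝓜_DM of E_P[L(δ_Q(Y), θ)] ≤ C + α·(1 − C) holds if and only if q(r) ≤ 1(r ≤ C) for all r ∈ [0,1]. -/
/-!
If `q` vanishes above `C`, the implemented loss is at most `C` whenever the certificate is valid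
(`L ≤ R`: either the action is not adopted, or it is adopted with `L ≤ R ≤ C`) and at most `1`
otherwise, which happens with probability at most `α`.

Conversely, if `q r > 0` for some `r > C`, richness lets nature put mass `1 - α` on
`(L, R) = (r, r)` and mass `α` on `(1, r₁)` with `q r₁` close to `sup q = 1`. The first atom
costs `(1 - α) q(r) (r - C)` above `C`, more than the amount `α (1 - C) (1 - q r₁)` by which the
second atom falls short of the worst case `1`.
-/

open MeasureTheory Set

/-- Conditional expectation, given loss `x.1` and certificate `x.2`, of the implemented loss
`Q * x.1 + (1 - Q) * C` when `Q` is adopted with probability `q x.2`. -/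
def expectedImplementedLoss (q : ℝ → ℝ) (C : ℝ) (x : ℝ × ℝ) : ℝ :=
  q x.2 * x.1 + (1 - q x.2) * C

lemma measurable_expectedImplementedLoss {q : ℝ → ℝ} (hq : Measurable q) (C : ℝ) :
    Measurable (expectedImplementedLoss q C) := by
  unfold expectedImplementedLoss
  fun_prop

section UpperBound

variable {q : ℝ → ℝ} {C l r : ℝ}

lemma expectedImplementedLoss_le_one (hq : q r ∈ Icc 0 1) (hl : l ≤ 1) (hC : C ≤ 1) :
    expectedImplementedLoss q C (l, r) ≤ 1 := by
  unfold expectedImplementedLoss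
  nlinarith [hq.1, hq.2]

lemma expectedImplementedLoss_le_of_le (hq : 0 ≤ q r)
    (hqC : q r ≤ if r ≤ C then 1 else 0) (hlr : l ≤ r) :
    expectedImplementedLoss q C (l, r) ≤ C := by
  unfold expectedImplementedLoss
  split_ifs at hqC with hrC
  · nlinarith
  · simp [le_antisymm hqC hq]

lemma expectedImplementedLoss_nonneg (hq : q r ∈ Icc 0 1) (hl : 0 ≤ l) (hC : 0 ≤ C) :
    0 ≤ expectedImplementedLoss q C (l, r) := by
  unfold expectedImplementedLoss
  nlinarith [hq.1, hq.2]

theorem integral_expectedImplementedLoss_le {Ω : Type*} [MeasurableSpace Ω] (μ : Measure Ω)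
    [IsProbabilityMeasure μ] {ℓ ρ : Ω → ℝ} (hℓ : Measurable ℓ) (hρ : Measurable ρ)
    (hℓ01 : ∀ ω, ℓ ω ∈ Icc 0 1) (hC : C ∈ Icc 0 1) (hq01 : ∀ r, q r ∈ Icc 0 1)
    (hqC : ∀ ω, q (ρ ω) ≤ if ρ ω ≤ C then 1 else 0) {α : ℝ}
    (hcov : ENNReal.ofReal (1 - α) ≤ μ {ω | ℓ ω ≤ ρ ω}) :
    ∫ ω, expectedImplementedLoss q C (ℓ ω, ρ ω) ∂μ ≤ C + α * (1 - C) := by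
  set S := {ω | ℓ ω ≤ ρ ω}
  have hS : MeasurableSet S := measurableSet_le hℓ hρ
  have hbound : ∀ ω,
      expectedImplementedLoss q C (ℓ ω, ρ ω) ≤ C + Sᶜ.indicator (fun _ ↦ 1 - C) ω := by
    intro ω
    by_cases hω : ω ∈ S
    · simpa [hω] using expectedImplementedLoss_le_of_le (hq01 _).1 (hqC ω) hω
    · simpa [hω] using expectedImplementedLoss_le_one (hq01 _) (hℓ01 ω).2 hC.2
  have hSc : μ.real Sᶜ ≤ α := by
    have := (ENNReal.ofReal_le_iff_le_toReal (measure_ne_top μ S)).1 hcov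
    rw [measureReal_compl hS, probReal_univ]
    linarith [show μ.real S = (μ S).toReal from rfl]
  calc ∫ ω, expectedImplementedLoss q C (ℓ ω, ρ ω) ∂μ
      ≤ ∫ ω, C + Sᶜ.indicator (fun _ ↦ 1 - C) ω ∂μ :=
        integral_mono_of_nonneg
          (.of_forall fun ω ↦ expectedImplementedLoss_nonneg (hq01 _) (hℓ01 ω).1 hC.1)
          ((integrable_const C).add ((integrable_const _).indicator hS.compl))
          (.of_forall hbound)
    _ = C + μ.real Sᶜ * (1 - C) := by
        rw [integral_add (integrable_const C) ((integrable_const _).indicator hS.compl),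
          integral_const, integral_indicator_const _ hS.compl]
        simp
    _ ≤ C + α * (1 - C) := by gcongr; linarith [hC.2]

end UpperBound

section TwoPointLaw

noncomputable def twoPointLaw (α r r₁ : ℝ) : Measure (ℝ × ℝ) :=
  ENNReal.ofReal (1 - α) • Measure.dirac (r, r) + ENNReal.ofReal α • Measure.dirac (1, r₁)

variable {α r r₁ : ℝ}

lemma twoPointLaw_apply_of_mem (hα : α ∈ Icc 0 1) {s : Set (ℝ × ℝ)} (hr : (r, r) ∈ s)
    (hr₁ : ((1 : ℝ), r₁) ∈ s) : twoPointLaw α r r₁ s = 1 := by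
  rw [twoPointLaw, Measure.add_apply, Measure.smul_apply, Measure.smul_apply,
    Measure.dirac_apply_of_mem hr, Measure.dirac_apply_of_mem hr₁, smul_eq_mul, smul_eq_mul,
    mul_one, mul_one, ← ENNReal.ofReal_add (by linarith [hα.2]) hα.1]
  simp

lemma isProbabilityMeasure_twoPointLaw (hα : α ∈ Icc 0 1) :
    IsProbabilityMeasure (twoPointLaw α r r₁) :=
  ⟨twoPointLaw_apply_of_mem hα (mem_univ _) (mem_univ _)⟩

lemma ofReal_one_sub_le_twoPointLaw_setOf_le :
    ENNReal.ofReal (1 - α) ≤ twoPointLaw α r r₁ {x | x.1 ≤ x.2} := by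
  rw [twoPointLaw, Measure.add_apply, Measure.smul_apply,
    Measure.dirac_apply_of_mem (show (r, r) ∈ {x : ℝ × ℝ | x.1 ≤ x.2} from le_refl r),
    smul_eq_mul, mul_one]
  exact le_self_add

lemma integral_twoPointLaw (hα : α ∈ Icc 0 1) (f : ℝ × ℝ → ℝ) :
    ∫ x, f x ∂twoPointLaw α r r₁ = (1 - α) * f (r, r) + α * f (1, r₁) := by
  rw [twoPointLaw, integral_add_measure ((integrable_dirac (by simp)).smul_measure (by simp))
      ((integrable_dirac (by simp)).smul_measure (by simp)),
    integral_smul_measure, integral_smul_measure, integral_dirac, integral_dirac,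
    ENNReal.toReal_ofReal (by linarith [hα.2]), ENNReal.toReal_ofReal hα.1, smul_eq_mul,
    smul_eq_mul]

end TwoPointLaw

theorem exists_integral_twoPointLaw_gt {q : ℝ → ℝ} {α C r : ℝ} (hα : α ∈ Ioo 0 1)
    (hC : C < 1) (hsup : sSup (q '' Icc 0 1) = 1) (hCr : C < r) (hqr : 0 < q r) :
    ∃ r₁ ∈ Icc (0 : ℝ) 1,
      C + α * (1 - C) < ∫ x, expectedImplementedLoss q C x ∂twoPointLaw α r r₁ := by
  have hαC : 0 < α * (1 - C) := mul_pos hα.1 (by linarith)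
  set ε := (1 - α) * q r * (r - C) / (α * (1 - C))
  have hε : 0 < ε := div_pos (mul_pos (mul_pos (by linarith [hα.2]) hqr) (by linarith)) hαC
  obtain ⟨_, ⟨r₁, hr₁, rfl⟩, hqr₁⟩ :=
    exists_lt_of_lt_csSup ((nonempty_Icc.2 zero_le_one).image q)
      (show 1 - ε < sSup (q '' Icc 0 1) by linarith)
  refine ⟨r₁, hr₁, ?_⟩
  have hsaving : α * (1 - C) * (1 - q r₁) < (1 - α) * q r * (r - C) := by
    calc α * (1 - C) * (1 - q r₁) < α * (1 - C) * ε := by gcongr; linarith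
      _ = (1 - α) * q r * (r - C) := mul_div_cancel₀ _ hαC.ne'
  rw [integral_twoPointLaw (Ioo_subset_Icc_self hα)]
  unfold expectedImplementedLoss
  linarith

/-- Lemma: under the richness condition, if additionally `sup_{r ∈ [0,1]} q(r) = 1`, then
the worst-case risk bound `sup_{(θ,P) ∈ M} E_P[L(δ_Q(Y), θ)] ≤ C + α·(1-C)` holds if and
only if `q(r) ≤ 1(r ≤ C)` for all `r ∈ [0,1]`. -/
theorem statement4
    {Y : Type*} [MeasurableSpace Y] {A : Type*} {Θ : Type*}
    (L : A → Θ → ℝ) (hL : ∀ a θ, L a θ ∈ Icc (0 : ℝ) 1)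
    (α : ℝ) (hα : α ∈ Ioo (0 : ℝ) 1)
    (δ : Y → A) (R : Y → ℝ) (hR01 : ∀ y, R y ∈ Icc (0 : ℝ) 1)
    (M : Set (Θ × Measure Y))
    (hMprob : ∀ p ∈ M, IsProbabilityMeasure p.2)
    (hMdef : ∀ p ∈ M, ENNReal.ofReal (1 - α) ≤ p.2 {y | L (δ y) p.1 ≤ R y})
    (C : ℝ) (hC : C ∈ Ico (0 : ℝ) 1)
    (q : ℝ → ℝ) (hq01 : ∀ r, q r ∈ Icc (0 : ℝ) 1) (hmeasq : Measurable q)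
    (hmeasL : ∀ θ : Θ, Measurable fun y => L (δ y) θ)
    (hmeasR : Measurable R)
    (hrich : ∀ G : Measure (ℝ × ℝ), IsProbabilityMeasure G →
      G (Icc (0 : ℝ) 1 ×ˢ Icc (0 : ℝ) 1) = 1 →
      ENNReal.ofReal (1 - α) ≤ G {x | x.1 ≤ x.2} →
      ∃ p ∈ M, Measure.map (fun y => (L (δ y) p.1, R y)) p.2 = G)
    (hsup : sSup (q '' Icc (0 : ℝ) 1) = 1) :
    (∀ p ∈ M,
        ∫ y, (q (R y) * L (δ y) p.1 + (1 - q (R y)) * C) ∂p.2 ≤ C + α * (1 - C))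
      ↔ (∀ r ∈ Icc (0 : ℝ) 1, q r ≤ if r ≤ C then 1 else 0) := by
  constructor
  · intro hbound r hr
    by_contra! hqr
    have hCr : C < r := by
      by_contra! hrC
      simp only [if_pos hrC] at hqr
      linarith [(hq01 r).2]
    rw [if_neg hCr.not_ge] at hqr
    obtain ⟨r₁, hr₁, hgt⟩ := exists_integral_twoPointLaw_gt hα hC.2 hsup hCr hqr
    have hα' := Ioo_subset_Icc_self hα
    obtain ⟨p, hp, hmap⟩ := hrich _ (isProbabilityMeasure_twoPointLaw hα')
      (twoPointLaw_apply_of_mem hα' ⟨hr, hr⟩ ⟨⟨zero_le_one, le_rfl⟩, hr₁⟩)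
      ofReal_one_sub_le_twoPointLaw_setOf_le
    have hlaw : ∫ y, (q (R y) * L (δ y) p.1 + (1 - q (R y)) * C) ∂p.2
        = ∫ x, expectedImplementedLoss q C x ∂twoPointLaw α r r₁ := by
      rw [← hmap, integral_map ((hmeasL p.1).prodMk hmeasR).aemeasurable
        (measurable_expectedImplementedLoss hmeasq C).aestronglyMeasurable]
      rfl
    linarith [hbound p hp]
  · intro hq p hp
    have := hMprob p hp
    exact integral_expectedImplementedLoss_le p.2 (hmeasL p.1) hmeasR (fun y ↦ hL _ _)
      (Ico_subset_Icc_self hC) hq01 (fun y ↦ hq _ (hR01 y)) (hMdef p hp)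
end

section
/- For any (1−α) P-certified decision (δ̃, R̃) and any ε > 0, there exist a (1−α) confidence set Θ̂(·) (i.e., P{θ ∈ Θ̂(Y)} ≥ 1 − α for all (θ, P) ∈ 𝓜) and a decision rule δ such that sup_{θ ∈ Θ̂(Y)} L(δ(Y), θ) ≤ inf_{a ∈ 𝒜} sup_{θ ∈ Θ̂(Y)} L(a, θ) + ε for all Y, and such that R(Y) := sup_{θ ∈ Θ̂(Y)} L(δ(Y), θ) satisfies R(Y) ≤ R̃(Y) for all Y; in particular (δ, R) weakly dominates (δ̃, R̃). (The supremum over an empty set is defined as 0.) -/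
open MeasureTheory Set

/-- Theorem 1 (`dominate`): for any `(1-α)` P-certified decision `(δ̃, R̃)` and any
`ε > 0`, there exist a `(1-α)` confidence set `Θ̂(·)` and a decision rule `δ` performing
`ε`-approximate as-if minimax optimization against `Θ̂(Y)` whose certificate
`R(Y) = sup_{θ ∈ Θ̂(Y)} L(δ(Y), θ)` satisfies `R(Y) ≤ R̃(Y)` for all `Y`; in particular
`(δ, R)` weakly dominates `(δ̃, R̃)`. (In `ℝ`, `sSup ∅ = 0`, matching the convention that
the supremum over an empty set is `0`.) -/
theorem statement6
    {Y : Type*} [MeasurableSpace Y] {A : Type*} [Nonempty A] {Θ : Type*}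
    (L : A → Θ → ℝ) (hL : ∀ a θ, L a θ ∈ Icc (0 : ℝ) 1)
    (α : ℝ) (hα : α ∈ Ioo (0 : ℝ) 1)
    (M : Set (Θ × Measure Y))
    (hMprob : ∀ p ∈ M, IsProbabilityMeasure p.2)
    (δt : Y → A) (Rt : Y → ℝ) (hRt01 : ∀ y, Rt y ∈ Icc (0 : ℝ) 1)
    (hcert : ∀ p ∈ M, ENNReal.ofReal (1 - α) ≤ p.2 {y | L (δt y) p.1 ≤ Rt y})
    (ε : ℝ) (hε : 0 < ε) :
    ∃ (Θhat : Y → Set Θ) (δ : Y → A),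
      -- `Θ̂` is a `(1-α)` confidence set
      (∀ p ∈ M, ENNReal.ofReal (1 - α) ≤ p.2 {y | p.1 ∈ Θhat y}) ∧
      -- `δ` is an `ε`-approximate as-if minimax decision against `Θ̂(Y)`
      (∀ y, sSup ((fun θ => L (δ y) θ) '' Θhat y)
          ≤ (⨅ a : A, sSup ((fun θ => L a θ) '' Θhat y)) + ε) ∧
      -- the resulting certificate `R(Y)` is pointwise below `R̃(Y)` ...
      (∀ y, sSup ((fun θ => L (δ y) θ) '' Θhat y) ≤ Rt y) ∧
      -- ... and hence `(δ, R)` weakly dominates `(δ̃, R̃)`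
      (∀ p ∈ M, ∀ r : ℝ,
        p.2 {y | r ≤ sSup ((fun θ => L (δ y) θ) '' Θhat y)} ≤ p.2 {y | r ≤ Rt y}) := by

  classical
  set Θhat : Y → Set Θ := fun y => {θ | L (δt y) θ ≤ Rt y} with hΘhat
  have Snonneg : ∀ (a : A) (y : Y), 0 ≤ sSup ((fun θ => L a θ) '' Θhat y) := by
    intro a y
    apply Real.sSup_nonneg
    rintro x ⟨θ, _, rfl⟩
    exact (hL a θ).1
  have Stle : ∀ y, sSup ((fun θ => L (δt y) θ) '' Θhat y) ≤ Rt y := by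
    intro y
    apply Real.sSup_le
    · rintro x ⟨θ, hθ, rfl⟩
      exact hθ
    · exact (hRt01 y).1
  have hbdd : ∀ y, BddBelow (Set.range fun a : A => sSup ((fun θ => L a θ) '' Θhat y)) := by
    intro y
    exact ⟨0, by rintro x ⟨a, rfl⟩; exact Snonneg a y⟩
  have hchoice : ∀ y, ∃ a : A,
      sSup ((fun θ => L a θ) '' Θhat y)
        ≤ (⨅ a : A, sSup ((fun θ => L a θ) '' Θhat y)) + ε ∧
      sSup ((fun θ => L a θ) '' Θhat y) ≤ Rt y := by
    intro y
    by_cases hcase : sSup ((fun θ => L (δt y) θ) '' Θhat y)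
        ≤ (⨅ a : A, sSup ((fun θ => L a θ) '' Θhat y)) + ε
    · exact ⟨δt y, hcase, Stle y⟩
    · have hlt : (⨅ a : A, sSup ((fun θ => L a θ) '' Θhat y))
          < (⨅ a : A, sSup ((fun θ => L a θ) '' Θhat y)) + ε := lt_add_of_pos_right _ hε
      obtain ⟨a, ha⟩ := exists_lt_of_ciInf_lt hlt
      refine ⟨a, ha.le, ha.le.trans ?_⟩
      have : (⨅ a : A, sSup ((fun θ => L a θ) '' Θhat y)) + ε
          ≤ sSup ((fun θ => L (δt y) θ) '' Θhat y) := le_of_not_ge hcase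
      exact this.trans (Stle y)
  choose δ hδ1 hδ2 using hchoice
  refine ⟨Θhat, δ, ?_, hδ1, hδ2, ?_⟩
  · intro p hp
    exact hcert p hp
  · intro p hp r
    apply measure_mono
    intro y hy
    exact le_trans hy (hδ2 y)
end

section
/- For any E-certified decision (δ̃, R̃) (i.e., E_P[L(δ̃(Y), θ)/R̃(Y)] ≤ 1 for all (θ, P) ∈ 𝓜) and any ε > 0, there exists a family of e-variables E(·, θ), θ ∈ Θ (each satisfying E_P[E(Y, θ)] ≤ 1 for all P with (θ, P) ∈ 𝓜), and a decision rule δ such that R(Y) := sup_{θ ∈ Θ} L(δ(Y), θ)/E(Y, θ) ≤ inf_{a ∈ 𝒜} sup_{θ ∈ Θ} L(a, θ)/E(Y, θ) + ε, and R(Y) ≤ R̃(Y) for all Y; in particular (δ, R) weakly dominates (δ̃, R̃). -/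
open MeasureTheory Set
open scoped ENNReal

/-!
The certificate itself supplies the e-variables: `E(y, θ) := L(δ̃(y), θ) / R̃(y)` has
`E_P[E(Y, θ)] ≤ 1` precisely because `(δ̃, R̃)` is E-certified, and against these e-variables the
worst-case E-posterior loss of `δ̃(y)` is at most `R̃(y)`. Choosing at each `y` an action that is
`ε`-optimal for the worst-case E-posterior loss and never worse than `δ̃(y)` gives `δ`.
-/

theorem ENNReal.div_div_le_self (a b : ℝ≥0∞) : a / (a / b) ≤ b := by
  rcases eq_or_ne b 0 with rfl | hb0
  · rcases eq_or_ne a 0 with rfl | ha0 <;> simp [ENNReal.div_zero, *]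
  rcases eq_or_ne b ⊤ with rfl | hbt
  · exact le_top
  exact ENNReal.div_le_of_le_mul (ENNReal.mul_div_cancel hb0 hbt).ge

theorem ENNReal.exists_le_iInf_add_and_le {ι : Type*} (f : ι → ℝ≥0∞) (i₀ : ι) {ε : ℝ≥0∞}
    (hε : ε ≠ 0) : ∃ i, f i ≤ (⨅ j, f j) + ε ∧ f i ≤ f i₀ := by
  rcases le_or_gt (f i₀) ((⨅ j, f j) + ε) with h | h
  · exact ⟨i₀, h, le_rfl⟩
  · have hinf : (⨅ j, f j) ≠ ⊤ := ne_top_of_lt (le_self_add.trans_lt h)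
    obtain ⟨i, hi⟩ := iInf_lt_iff.mp (ENNReal.lt_add_right hinf hε)
    exact ⟨i, hi.le, hi.le.trans h.le⟩

theorem ENNReal.iSup_div_div_le {ι : Type*} (f : ι → ℝ≥0∞) (r : ℝ≥0∞) :
    ⨆ i, f i / (f i / r) ≤ r :=
  iSup_le fun i => ENNReal.div_div_le_self (f i) r

theorem statement8_general
    {Y : Type*} [MeasurableSpace Y] {A : Type*} {Θ : Type*}
    (L : A → Θ → ℝ≥0∞)
    (M : Set (Θ × Measure Y))
    (δt : Y → A) (Rt : Y → ℝ≥0∞)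
    (hcert : ∀ p ∈ M, ∫⁻ y, L (δt y) p.1 / Rt y ∂p.2 ≤ 1)
    (ε : ℝ) (hε : 0 < ε) :
    ∃ (Evar : Y → Θ → ℝ≥0∞) (δ : Y → A) (R : Y → ℝ≥0∞),
      -- each `E(·, θ)` is an e-variable against `θ`
      (∀ θ : Θ, ∀ P : Measure Y, (θ, P) ∈ M → ∫⁻ y, Evar y θ ∂P ≤ 1) ∧
      -- `R` is the worst-case E-posterior loss of `δ` ...
      (∀ y, R y = ⨆ θ : Θ, L (δ y) θ / Evar y θ) ∧
      -- ... which `ε`-approximately minimizes the worst-case E-posterior loss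
      (∀ y, R y ≤ (⨅ a : A, ⨆ θ : Θ, L a θ / Evar y θ) + ENNReal.ofReal ε) ∧
      -- and `R(Y) ≤ R̃(Y)` pointwise ...
      (∀ y, R y ≤ Rt y) ∧
      -- ... hence `(δ, R)` weakly dominates `(δ̃, R̃)`
      (∀ p ∈ M, ∀ r : ℝ≥0∞, p.2 {y | r ≤ R y} ≤ p.2 {y | r ≤ Rt y}) := by
  set Evar : Y → Θ → ℝ≥0∞ := fun y θ => L (δt y) θ / Rt y
  have hε' : ENNReal.ofReal ε ≠ 0 := (ENNReal.ofReal_pos.mpr hε).ne'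
  choose δ hδ_opt hδ_le using fun y =>
    ENNReal.exists_le_iInf_add_and_le (fun a => ⨆ θ, L a θ / Evar y θ) (δt y) hε'
  have hR_le : ∀ y, ⨆ θ, L (δ y) θ / Evar y θ ≤ Rt y := fun y =>
    (hδ_le y).trans (ENNReal.iSup_div_div_le (L (δt y)) (Rt y))
  refine ⟨Evar, δ, fun y => ⨆ θ, L (δ y) θ / Evar y θ, fun θ P hP => hcert (θ, P) hP,
    fun _ => rfl, hδ_opt, hR_le, fun p _ r => measure_mono fun y hy => le_trans hy (hR_le y)⟩

/-- Proposition (`edominate`): for any E-certified decision `(δ̃, R̃)` (i.e.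
`E_P[L(δ̃(Y),θ)/R̃(Y)] ≤ 1` for all `(θ,P) ∈ M`) and any `ε > 0`, there exist a family of
e-variables `E(·, θ)` and a decision rule `δ` such that
`R(Y) = sup_θ L(δ(Y),θ)/E(Y,θ) ≤ inf_a sup_θ L(a,θ)/E(Y,θ) + ε` and `R(Y) ≤ R̃(Y)` for
all `Y`; in particular `(δ, R)` weakly dominates `(δ̃, R̃)`. (Losses are strictly
positive; values, ratios and the convention `x/0 = ∞` for `x > 0` are taken in `ℝ≥0∞`.) -/
theorem statement8
    {Y : Type*} [MeasurableSpace Y] {A : Type*} [Nonempty A] {Θ : Type*}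
    (L : A → Θ → ℝ≥0∞) (hLpos : ∀ a θ, 0 < L a θ) (hLfin : ∀ a θ, L a θ < ⊤)
    (M : Set (Θ × Measure Y))
    (hMprob : ∀ p ∈ M, IsProbabilityMeasure p.2)
    (δt : Y → A) (Rt : Y → ℝ≥0∞)
    (hcert : ∀ p ∈ M, ∫⁻ y, L (δt y) p.1 / Rt y ∂p.2 ≤ 1)
    (ε : ℝ) (hε : 0 < ε) :
    ∃ (Evar : Y → Θ → ℝ≥0∞) (δ : Y → A) (R : Y → ℝ≥0∞),
      -- each `E(·, θ)` is an e-variable against `θ`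
      (∀ θ : Θ, ∀ P : Measure Y, (θ, P) ∈ M → ∫⁻ y, Evar y θ ∂P ≤ 1) ∧
      -- `R` is the worst-case E-posterior loss of `δ` ...
      (∀ y, R y = ⨆ θ : Θ, L (δ y) θ / Evar y θ) ∧
      -- ... which `ε`-approximately minimizes the worst-case E-posterior loss
      (∀ y, R y ≤ (⨅ a : A, ⨆ θ : Θ, L a θ / Evar y θ) + ENNReal.ofReal ε) ∧
      -- and `R(Y) ≤ R̃(Y)` pointwise ...
      (∀ y, R y ≤ Rt y) ∧
      -- ... hence `(δ, R)` weakly dominates `(δ̃, R̃)`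
      (∀ p ∈ M, ∀ r : ℝ≥0∞, p.2 {y | r ≤ R y} ≤ p.2 {y | r ≤ Rt y}) :=
  statement8_general L M δt Rt hcert ε hε
end

section
/- Let (δ, R) be an E-certified decision (E_P[L(δ(Y), θ)/R(Y)] ≤ 1 for all (θ, P) ∈ 𝓜) and C > 0 the cost of the default action. For any adoption variable Q with Q ≤ 1(R(Y) ≤ C) almost surely, the risk satisfies E_P[L(δ_Q(Y), θ)] ≤ E_P[max(L(δ(Y), θ)/R(Y), 1)·C] ≤ 2C for all (θ, P) ∈ 𝓜. -/
open MeasureTheory Set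
open scoped ENNReal

/-- Proposition (`eadoption`): for an E-certified decision `(δ, R)` and default cost
`C > 0`, any adoption rule with `Q ≤ 1(R(Y) ≤ C)` almost surely satisfies
`E_P[L(δ_Q(Y),θ)] ≤ E_P[max(L(δ(Y),θ)/R(Y), 1)·C] ≤ 2C` for all `(θ,P) ∈ M`. (Losses
are strictly positive, not necessarily bounded; ratios are in `ℝ≥0∞` with `x/0 = ∞` for
`x > 0`.) -/
theorem statement9
    {Y : Type*} [MeasurableSpace Y] {A : Type*} {Θ : Type*}
    (L : A → Θ → ℝ≥0∞) (hLpos : ∀ a θ, 0 < L a θ) (hLfin : ∀ a θ, L a θ < ⊤)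
    (M : Set (Θ × Measure Y))
    (hMprob : ∀ p ∈ M, IsProbabilityMeasure p.2)
    (δ : Y → A) (R : Y → ℝ≥0∞)
    (hcert : ∀ p ∈ M, ∫⁻ y, L (δ y) p.1 / R y ∂p.2 ≤ 1)
    (C : ℝ≥0∞) (hC : 0 < C) (hCfin : C < ⊤)
    (Q : Y → Bool)
    (hQ : ∀ p ∈ M, ∀ᵐ y ∂p.2, Q y = true → R y ≤ C) :
    ∀ p ∈ M,
      ∫⁻ y, (if Q y then L (δ y) p.1 else C) ∂p.2
          ≤ ∫⁻ y, max (L (δ y) p.1 / R y) 1 * C ∂p.2 ∧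
      ∫⁻ y, max (L (δ y) p.1 / R y) 1 * C ∂p.2 ≤ 2 * C := by
  intro p hp
  have hprob := hMprob p hp
  constructor
  · apply lintegral_mono_ae
    filter_upwards [hQ p hp] with y hy
    by_cases hq : Q y = true
    · simp only [hq, if_true]
      have hRC := hy hq
      by_cases hR0 : R y = 0
      · have htop : L (δ y) p.1 / R y = ⊤ := by
          rw [hR0, ENNReal.div_zero (hLpos _ _).ne']
        rw [htop]
        simp [ENNReal.top_mul hC.ne']
      · calc L (δ y) p.1 = L (δ y) p.1 / R y * R y :=
              (ENNReal.div_mul_cancel hR0 (lt_of_le_of_lt hRC hCfin).ne).symm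
          _ ≤ L (δ y) p.1 / R y * C := mul_le_mul_right hRC _
          _ ≤ max (L (δ y) p.1 / R y) 1 * C := mul_le_mul_left (le_max_left _ _) _
    · simp only [hq, if_false]
      calc C = 1 * C := (one_mul C).symm
        _ ≤ max (L (δ y) p.1 / R y) 1 * C := mul_le_mul_left (le_max_right _ _) _
  · calc ∫⁻ y, max (L (δ y) p.1 / R y) 1 * C ∂p.2
        = (∫⁻ y, max (L (δ y) p.1 / R y) 1 ∂p.2) * C := lintegral_mul_const' C _ hCfin.ne
      _ ≤ (∫⁻ y, (L (δ y) p.1 / R y + 1) ∂p.2) * C := by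
          gcongr with y
          exact max_le (le_add_right le_rfl) le_add_self
      _ = ((∫⁻ y, L (δ y) p.1 / R y ∂p.2) + 1) * C := by
          rw [lintegral_add_right _ measurable_const, lintegral_one, measure_univ]
      _ ≤ (1 + 1) * C := by gcongr; exact hcert p hp
      _ = 2 * C := by norm_num
end

section
/- Assume the action space 𝒜 is finite. Fix γ > 0 and, for a family of e-variables E(·, θ), define E_γ(Y, θ) = γ·E(Y, θ) + 1, δ(Y) ∈ argmin_{a ∈ 𝒜} sup_{θ ∈ Θ} L(a, θ)/E_γ(θ, Y), and R(Y) = min_{a ∈ 𝒜} sup_{θ ∈ Θ} L(a, θ)/E_γ(θ, Y). Then for any adoption variable Q with Q ≤ 1(R(Y) ≤ C), for all (θ, P) ∈ 𝓜: E_P[L(δ_Q(Y), θ)] ≤ E_P[max(L(δ(Y), θ)/R(Y), 1)·C] ≤ (1 + γ)·C. -/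
open MeasureTheory
open scoped ENNReal

/-! The adopted loss is at most `max (L(δ)/R) 1 · C` pointwise: when `Q` adopts, `R ≤ C`, and
otherwise the default costs `C`. Since `δ` attains `R = sup_θ L(δ,θ)/E_γ(θ)`, one has
`L(δ,θ)/R ≤ E_γ(θ)`, and `E_γ ≥ 1`; so the middle term is at most `E_P[E_γ(θ)]·C`, which is
at most `(γ + 1)·C` because `E(·,θ)` is an e-variable. -/

namespace ENNReal

theorem div_le_of_div_le {a b c : ℝ≥0∞} (h : a / b ≤ c) : a / c ≤ b := by
  rcases eq_or_ne c ∞ with rfl | hc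
  · simp
  rcases eq_or_ne b ∞ with rfl | hb
  · exact le_top
  exact div_le_of_le_mul' ((ENNReal.div_le_iff_le_mul (Or.inr hc) (Or.inl hb)).1 h)

theorem le_max_div_one_mul {a r c : ℝ≥0∞} (hrc : r ≤ c) (hc : c ≠ 0) :
    a ≤ max (a / r) 1 * c := by
  rcases eq_or_ne c ∞ with rfl | hc_top
  · rw [mul_top (zero_lt_one.trans_le (le_max_right _ _)).ne']
    exact le_top
  calc a = a / c * c := (ENNReal.div_mul_cancel hc hc_top).symm
    _ ≤ max (a / r) 1 * c := by
      gcongr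
      exact (ENNReal.div_le_div_left hrc a).trans (le_max_left _ _)

end ENNReal

section Adoption

variable {Y : Type*} [MeasurableSpace Y] {μ : Measure Y}

theorem lintegral_const_mul_add_one_le [IsProbabilityMeasure μ] {f : Y → ℝ≥0∞} {k : ℝ≥0∞}
    (hk : k ≠ ∞) (hf : ∫⁻ y, f y ∂μ ≤ 1) : ∫⁻ y, (k * f y + 1) ∂μ ≤ k + 1 := by
  rw [lintegral_add_right _ measurable_const, lintegral_const_mul' _ _ hk, lintegral_one,
    measure_univ]
  gcongr
  exact mul_le_of_le_one_right' hf

theorem lintegral_adopted_le (L R : Y → ℝ≥0∞) {C : ℝ≥0∞} (hC : C ≠ 0) (Q : Y → Bool)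
    (hQ : ∀ y, Q y = true → R y ≤ C) :
    ∫⁻ y, (if Q y then L y else C) ∂μ ≤ ∫⁻ y, max (L y / R y) 1 * C ∂μ := by
  refine lintegral_mono fun y => ?_
  cases hq : Q y
  · simpa using mul_le_mul_left (le_max_right (L y / R y) 1) C
  · exact ENNReal.le_max_div_one_mul (hQ y hq) hC

theorem lintegral_max_div_one_mul_le [IsProbabilityMeasure μ] (L R E : Y → ℝ≥0∞)
    {k : ℝ≥0∞} (hk : k ≠ ∞) (hE : ∫⁻ y, E y ∂μ ≤ 1) (hLR : ∀ y, L y / (k * E y + 1) ≤ R y)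
    (C : ℝ≥0∞) : ∫⁻ y, max (L y / R y) 1 * C ∂μ ≤ (1 + k) * C := by
  rcases eq_or_ne C ∞ with rfl | hC
  · rw [ENNReal.mul_top (by simp)]
    exact le_top
  have hmax : ∀ y, max (L y / R y) 1 ≤ k * E y + 1 := fun y =>
    max_le (ENNReal.div_le_of_div_le (hLR y)) le_add_self
  calc ∫⁻ y, max (L y / R y) 1 * C ∂μ ≤ ∫⁻ y, (k * E y + 1) * C ∂μ :=
        lintegral_mono fun y => mul_le_mul_left (hmax y) C
    _ = (∫⁻ y, (k * E y + 1) ∂μ) * C := lintegral_mul_const' _ _ hC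
    _ ≤ (1 + k) * C := by
      rw [add_comm 1 k]
      gcongr
      exact lintegral_const_mul_add_one_le hk hE

end Adoption

theorem statement12_general
    {Y : Type*} [MeasurableSpace Y] {A : Type*} {Θ : Type*}
    (L : A → Θ → ℝ≥0∞)
    (M : Set (Θ × Measure Y))
    (hMprob : ∀ p ∈ M, IsProbabilityMeasure p.2)
    (Evar : Y → Θ → ℝ≥0∞)
    (hE : ∀ θ : Θ, ∀ P : Measure Y, (θ, P) ∈ M → ∫⁻ y, Evar y θ ∂P ≤ 1)
    (γ : ℝ)
    (δ : Y → A) (R : Y → ℝ≥0∞)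
    -- `δ(Y)` attains the minimum over `𝒜` of the worst-case truncated E-posterior loss
    (hδ : ∀ y, (⨆ θ : Θ, L (δ y) θ / (ENNReal.ofReal γ * Evar y θ + 1))
        = ⨅ a : A, ⨆ θ : Θ, L a θ / (ENNReal.ofReal γ * Evar y θ + 1))
    -- and `R(Y)` is the minimized value
    (hR : ∀ y, R y = ⨅ a : A, ⨆ θ : Θ, L a θ / (ENNReal.ofReal γ * Evar y θ + 1))
    (C : ℝ≥0∞) (hC : 0 < C)
    (Q : Y → Bool) (hQ : ∀ y, Q y = true → R y ≤ C) :
    ∀ p ∈ M,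
      ∫⁻ y, (if Q y then L (δ y) p.1 else C) ∂p.2
          ≤ ∫⁻ y, max (L (δ y) p.1 / R y) 1 * C ∂p.2 ∧
      ∫⁻ y, max (L (δ y) p.1 / R y) 1 * C ∂p.2 ≤ (1 + ENNReal.ofReal γ) * C := by
  rintro ⟨θ, P⟩ hp
  have := hMprob _ hp
  have hLR : ∀ y, L (δ y) θ / (ENNReal.ofReal γ * Evar y θ + 1) ≤ R y := fun y => by
    rw [hR, ← hδ]
    exact le_iSup (fun θ' => L (δ y) θ' / (ENNReal.ofReal γ * Evar y θ' + 1)) θ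
  exact ⟨lintegral_adopted_le _ R hC.ne' Q hQ,
    lintegral_max_div_one_mul_le _ R _ ENNReal.ofReal_ne_top (hE θ P hp) hLR C⟩

/-- Proposition (`truncated`, first part): with `𝒜` finite, `γ > 0`,
`E_γ(Y,θ) = γ·E(Y,θ) + 1` for a family of e-variables `E(·,θ)`, `δ(Y)` minimizing
`sup_θ L(a,θ)/E_γ(Y,θ)` over `a ∈ 𝒜` and `R(Y)` the minimized value, any adoption rule
with `Q ≤ 1(R(Y) ≤ C)` satisfies
`E_P[L(δ_Q(Y),θ)] ≤ E_P[max(L(δ(Y),θ)/R(Y), 1)·C] ≤ (1+γ)·C` for all `(θ,P) ∈ M`. -/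
theorem statement12
    {Y : Type*} [MeasurableSpace Y] {A : Type*} [Fintype A] [Nonempty A] {Θ : Type*}
    (L : A → Θ → ℝ≥0∞) (hLpos : ∀ a θ, 0 < L a θ) (hLfin : ∀ a θ, L a θ < ⊤)
    (M : Set (Θ × Measure Y))
    (hMprob : ∀ p ∈ M, IsProbabilityMeasure p.2)
    (Evar : Y → Θ → ℝ≥0∞)
    (hE : ∀ θ : Θ, ∀ P : Measure Y, (θ, P) ∈ M → ∫⁻ y, Evar y θ ∂P ≤ 1)
    (γ : ℝ) (hγ : 0 < γ)
    (δ : Y → A) (R : Y → ℝ≥0∞)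
    -- `δ(Y)` attains the minimum over `𝒜` of the worst-case truncated E-posterior loss
    (hδ : ∀ y, (⨆ θ : Θ, L (δ y) θ / (ENNReal.ofReal γ * Evar y θ + 1))
        = ⨅ a : A, ⨆ θ : Θ, L a θ / (ENNReal.ofReal γ * Evar y θ + 1))
    -- and `R(Y)` is the minimized value
    (hR : ∀ y, R y = ⨅ a : A, ⨆ θ : Θ, L a θ / (ENNReal.ofReal γ * Evar y θ + 1))
    (C : ℝ≥0∞) (hC : 0 < C) (hCfin : C < ⊤)
    (Q : Y → Bool) (hQ : ∀ y, Q y = true → R y ≤ C) :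
    ∀ p ∈ M,
      ∫⁻ y, (if Q y then L (δ y) p.1 else C) ∂p.2
          ≤ ∫⁻ y, max (L (δ y) p.1 / R y) 1 * C ∂p.2 ∧
      ∫⁻ y, max (L (δ y) p.1 / R y) 1 * C ∂p.2 ≤ (1 + ENNReal.ofReal γ) * C :=
  statement12_general L M hMprob Evar hE γ δ R hδ hR C hC Q hQ
end

section
/- Assume the action space 𝒜 is finite and fix γ > 0. For any pair (δ̃, R̃) satisfying E_P[max(L(δ̃(Y), θ)/R̃(Y), 1)] ≤ 1 + γ for all (θ, P) ∈ 𝓜, there exists a family of e-variables E(·, θ) such that, setting E_γ(Y, θ) = γ·E(Y, θ) + 1 and R(Y) = min_{a ∈ 𝒜} sup_{θ ∈ Θ} L(a, θ)/E_γ(Y, θ) with δ(Y) attaining this minimum, one has R(Y) ≤ R̃(Y) for all Y; in particular (δ, R) weakly dominates (δ̃, R̃). -/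
open MeasureTheory Set
open scoped ENNReal

/-! Take `E(y, θ) = (max(L(δ̃ y, θ)/R̃ y, 1) - 1)/γ`. The certificate bounds its expectation by 1,
and `E_γ(y, θ) = max(L(δ̃ y, θ)/R̃ y, 1)`, so playing `δ̃ y` already gives worst-case
risk `L / max(L/R̃, 1) ≤ R̃`; the minimax action can only do better. -/

theorem ENNReal.div_max_div_one_le (a b : ℝ≥0∞) : a / max (a / b) 1 ≤ b := by
  rcases eq_or_ne b 0 with rfl | hb0
  · rcases eq_or_ne a 0 with rfl | ha
    · simp
    · simp [ENNReal.div_zero ha]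
  rcases eq_or_ne b ⊤ with rfl | hbt
  · exact le_top
  refine ENNReal.div_le_of_le_mul ?_
  calc a = b * (a / b) := (ENNReal.mul_div_cancel hb0 hbt).symm
    _ ≤ b * max (a / b) 1 := by gcongr; exact le_max_left _ _

theorem MeasureTheory.lintegral_tsub_one_div_le_one {Y : Type*} [MeasurableSpace Y]
    {μ : Measure Y} [IsProbabilityMeasure μ] {f : Y → ℝ≥0∞} {c : ℝ≥0∞}
    (hf : ∀ᵐ y ∂μ, 1 ≤ f y) (hc : c ≠ 0) (h : ∫⁻ y, f y ∂μ ≤ 1 + c) :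
    ∫⁻ y, (f y - 1) / c ∂μ ≤ 1 := by
  have hsub : ∫⁻ y, (f y - 1) ∂μ = ∫⁻ y, f y ∂μ - 1 := by
    rw [lintegral_sub measurable_const (by simp) hf]; simp
  calc ∫⁻ y, (f y - 1) / c ∂μ = (∫⁻ y, (f y - 1) ∂μ) / c := by
        simp_rw [div_eq_mul_inv]; exact lintegral_mul_const' _ _ (ENNReal.inv_ne_top.2 hc)
    _ ≤ 1 := ENNReal.div_le_of_le_mul (by rw [one_mul, hsub]; exact tsub_le_iff_left.2 h)

theorem statement13_general
    {Y : Type*} [MeasurableSpace Y] {A : Type*} [Fintype A] [Nonempty A] {Θ : Type*}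
    (L : A → Θ → ℝ≥0∞)
    (M : Set (Θ × Measure Y))
    (hMprob : ∀ p ∈ M, IsProbabilityMeasure p.2)
    (γ : ℝ) (hγ : 0 < γ)
    (δt : Y → A) (Rt : Y → ℝ≥0∞)
    (hcert : ∀ p ∈ M,
      ∫⁻ y, max (L (δt y) p.1 / Rt y) 1 ∂p.2 ≤ 1 + ENNReal.ofReal γ) :
    ∃ Evar : Y → Θ → ℝ≥0∞,
      -- each `E(·, θ)` is an e-variable against `θ`
      (∀ θ : Θ, ∀ P : Measure Y, (θ, P) ∈ M → ∫⁻ y, Evar y θ ∂P ≤ 1) ∧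
      ∃ δ : Y → A,
        -- `δ(Y)` attains the minimum defining `R(Y)`
        (∀ y, (⨆ θ : Θ, L (δ y) θ / (ENNReal.ofReal γ * Evar y θ + 1))
            = ⨅ a : A, ⨆ θ : Θ, L a θ / (ENNReal.ofReal γ * Evar y θ + 1)) ∧
        -- `R(Y) ≤ R̃(Y)` pointwise ...
        (∀ y, (⨅ a : A, ⨆ θ : Θ, L a θ / (ENNReal.ofReal γ * Evar y θ + 1)) ≤ Rt y) ∧
        -- ... hence `(δ, R)` weakly dominates `(δ̃, R̃)`
        (∀ p ∈ M, ∀ r : ℝ≥0∞,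
          p.2 {y | r ≤ ⨅ a : A, ⨆ θ : Θ, L a θ / (ENNReal.ofReal γ * Evar y θ + 1)}
            ≤ p.2 {y | r ≤ Rt y}) := by
  set c := ENNReal.ofReal γ
  have hc0 : c ≠ 0 := (ENNReal.ofReal_pos.2 hγ).ne'
  set m : Y → Θ → ℝ≥0∞ := fun y θ => max (L (δt y) θ / Rt y) 1
  have hEγ : ∀ y θ, c * ((m y θ - 1) / c) + 1 = m y θ := fun y θ => by
    rw [ENNReal.mul_div_cancel hc0 ENNReal.ofReal_ne_top, tsub_add_cancel_of_le (le_max_right _ _)]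
  have hR : ∀ y, (⨅ a : A, ⨆ θ : Θ, L a θ / (c * ((m y θ - 1) / c) + 1)) ≤ Rt y := fun y =>
    (iInf_le _ (δt y)).trans <| iSup_le fun θ => by
      simpa only [hEγ] using ENNReal.div_max_div_one_le (L (δt y) θ) (Rt y)
  choose δ hδ using fun y =>
    exists_eq_ciInf_of_finite (f := fun a : A => ⨆ θ : Θ, L a θ / (c * ((m y θ - 1) / c) + 1))
  refine ⟨fun y θ => (m y θ - 1) / c, fun θ P hP => ?_, δ, hδ, hR,
    fun p _ r => measure_mono fun y hy => le_trans hy (hR y)⟩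
  have := hMprob (θ, P) hP
  exact lintegral_tsub_one_div_le_one (ae_of_all _ fun y => le_max_right _ _) hc0 (hcert (θ, P) hP)

/-- Proposition (`truncated`, second part): with `𝒜` finite and `γ > 0`, for any pair
`(δ̃, R̃)` with `E_P[max(L(δ̃(Y),θ)/R̃(Y), 1)] ≤ 1 + γ` for all `(θ,P) ∈ M`, there is a
family of e-variables `E(·,θ)` such that, with `E_γ(Y,θ) = γ·E(Y,θ) + 1`,
`R(Y) = min_{a ∈ 𝒜} sup_θ L(a,θ)/E_γ(Y,θ)` and `δ(Y)` attaining this minimum, one has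
`R(Y) ≤ R̃(Y)` for all `Y`; in particular `(δ, R)` weakly dominates `(δ̃, R̃)`. -/
theorem statement13
    {Y : Type*} [MeasurableSpace Y] {A : Type*} [Fintype A] [Nonempty A] {Θ : Type*}
    (L : A → Θ → ℝ≥0∞) (hLpos : ∀ a θ, 0 < L a θ) (hLfin : ∀ a θ, L a θ < ⊤)
    (M : Set (Θ × Measure Y))
    (hMprob : ∀ p ∈ M, IsProbabilityMeasure p.2)
    (γ : ℝ) (hγ : 0 < γ)
    (δt : Y → A) (Rt : Y → ℝ≥0∞)
    (hcert : ∀ p ∈ M,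
      ∫⁻ y, max (L (δt y) p.1 / Rt y) 1 ∂p.2 ≤ 1 + ENNReal.ofReal γ) :
    ∃ Evar : Y → Θ → ℝ≥0∞,
      -- each `E(·, θ)` is an e-variable against `θ`
      (∀ θ : Θ, ∀ P : Measure Y, (θ, P) ∈ M → ∫⁻ y, Evar y θ ∂P ≤ 1) ∧
      ∃ δ : Y → A,
        -- `δ(Y)` attains the minimum defining `R(Y)`
        (∀ y, (⨆ θ : Θ, L (δ y) θ / (ENNReal.ofReal γ * Evar y θ + 1))
            = ⨅ a : A, ⨆ θ : Θ, L a θ / (ENNReal.ofReal γ * Evar y θ + 1)) ∧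
        -- `R(Y) ≤ R̃(Y)` pointwise ...
        (∀ y, (⨅ a : A, ⨆ θ : Θ, L a θ / (ENNReal.ofReal γ * Evar y θ + 1)) ≤ Rt y) ∧
        -- ... hence `(δ, R)` weakly dominates `(δ̃, R̃)`
        (∀ p ∈ M, ∀ r : ℝ≥0∞,
          p.2 {y | r ≤ ⨅ a : A, ⨆ θ : Θ, L a θ / (ENNReal.ofReal γ * Evar y θ + 1)}
            ≤ p.2 {y | r ≤ Rt y}) :=
  statement13_general L M hMprob γ hγ δt Rt hcert
end
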